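/- Let p = (1, 1) ∈ (0,∞)². Then: (i) the derivative of f at p vanishes (p is a critical point of f, corresponding to the normal Einstein metric on SO(4)/T²); (ii) the second derivative of f at p, viewed as a quadratic form on ℝ², is positive semidefinite with kernel exactly the line ℝ·(1,1); i.e. it has exactly one positive and one zero eigenvalue. In particular, the normal Einstein metric on SO(4)/T² has coindex 1. -/

import Mathlib

/-!
On the open positive quadrant `f = x₀^{1/2} x₁^{-1/2} + x₀^{-1/2} x₁^{1/2}`, a sum of two
monomials `x₀^a x₁^b` with real exponents. The first and second derivatives of such a monomial
are again combinations of monomials, all equal to `1` at `(1,1)`; there the gradient of `x₀^a x₁^b`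
is `(a, b)` and its Hessian is `[[a(a-1), ab], [ab, b(b-1)]]`. Summing over `(a, b) = ±(1/2, -1/2)`
gives gradient `0` and Hessian `(1/2) (v₀ - v₁) (w₀ - w₁)`, a positive semidefinite form whose
kernel is the diagonal.
-/

noncomputable section

/-- The normalized scalar curvature of invariant metrics on `SO(4)/T² = S² × S²`. -/
def scalSO4 : (Fin 2 → ℝ) → ℝ := fun x =>
  (x 0 * x 1) ^ ((1 : ℝ) / 2) * (1 / x 0 + 1 / x 1)

/-- The second derivative of `f` at `p`, as a quadratic/bilinear form. -/
def hessSO4 (p v w : Fin 2 → ℝ) : ℝ := iteratedFDeriv ℝ 2 scalSO4 p ![v, w]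

open Filter Topology ContinuousLinearMap

section IteratedFDeriv

variable {𝕜 E F : Type*} [NontriviallyNormedField 𝕜] [NormedAddCommGroup E] [NormedSpace 𝕜 E]
  [NormedAddCommGroup F] [NormedSpace 𝕜 F]

theorem iteratedFDeriv_two_apply_of_hasFDerivAt {f : E → F} {f' : E → E →L[𝕜] F}
    {f'' : E →L[𝕜] E →L[𝕜] F} {x : E} (hf : ∀ᶠ y in 𝓝 x, HasFDerivAt f (f' y) y)
    (hf' : HasFDerivAt f' f'' x) (v w : E) :
    iteratedFDeriv 𝕜 2 f x ![v, w] = f'' v w := by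
  have hfderiv : fderiv 𝕜 f =ᶠ[𝓝 x] f' := hf.mono fun y hy => hy.fderiv
  rw [iteratedFDeriv_two_apply, hfderiv.fderiv_eq, hf'.fderiv]
  rfl

end IteratedFDeriv

namespace SO4

def monomial (a b : ℝ) (x : Fin 2 → ℝ) : ℝ := x 0 ^ a * x 1 ^ b

abbrev coord (i : Fin 2) : (Fin 2 → ℝ) →L[ℝ] ℝ := proj i

def gradMonomial (a b : ℝ) (x : Fin 2 → ℝ) : (Fin 2 → ℝ) →L[ℝ] ℝ :=
  (a * monomial (a - 1) b x) • coord 0 + (b * monomial a (b - 1) x) • coord 1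

def hessMonomial (a b : ℝ) (x : Fin 2 → ℝ) : (Fin 2 → ℝ) →L[ℝ] (Fin 2 → ℝ) →L[ℝ] ℝ :=
  (a • gradMonomial (a - 1) b x).smulRight (coord 0) +
    (b • gradMonomial a (b - 1) x).smulRight (coord 1)

variable {x : Fin 2 → ℝ}

@[simp]
theorem monomial_one_one (a b : ℝ) : monomial a b ![1, 1] = 1 := by
  simp [monomial]

theorem hasFDerivAt_monomial (a b : ℝ) (hx0 : x 0 ≠ 0) (hx1 : x 1 ≠ 0) :
    HasFDerivAt (monomial a b) (gradMonomial a b x) x := by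
  have h0 := (coord 0).hasFDerivAt.rpow_const (p := a) (x := x) (Or.inl hx0)
  have h1 := (coord 1).hasFDerivAt.rpow_const (p := b) (x := x) (Or.inl hx1)
  refine (h0.mul h1).congr_fderiv ?_
  ext w
  simp only [gradMonomial, monomial, add_apply, smul_apply, proj_apply, smul_eq_mul]
  ring

theorem hasFDerivAt_gradMonomial (a b : ℝ) (hx0 : x 0 ≠ 0) (hx1 : x 1 ≠ 0) :
    HasFDerivAt (gradMonomial a b) (hessMonomial a b x) x :=
  (((hasFDerivAt_monomial (a - 1) b hx0 hx1).const_mul a).smul_const (coord 0)).add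
    (((hasFDerivAt_monomial a (b - 1) hx0 hx1).const_mul b).smul_const (coord 1))

theorem contDiffAt_monomial {n : WithTop ℕ∞} (a b : ℝ) (hx0 : x 0 ≠ 0) (hx1 : x 1 ≠ 0) :
    ContDiffAt ℝ n (monomial a b) x :=
  ((Real.contDiffAt_rpow_const_of_ne hx0).comp x (contDiff_apply ℝ ℝ 0).contDiffAt).mul
    ((Real.contDiffAt_rpow_const_of_ne hx1).comp x (contDiff_apply ℝ ℝ 1).contDiffAt)

def positiveQuadrant : Set (Fin 2 → ℝ) := {x | 0 < x 0 ∧ 0 < x 1}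

theorem isOpen_positiveQuadrant : IsOpen positiveQuadrant :=
  (isOpen_lt continuous_const (continuous_apply 0)).inter
    (isOpen_lt continuous_const (continuous_apply 1))

theorem one_one_mem_positiveQuadrant : ![1, 1] ∈ positiveQuadrant := by
  norm_num [positiveQuadrant]

theorem scalSO4_eq (hx : x ∈ positiveQuadrant) :
    scalSO4 x = monomial (1 / 2) (-(1 / 2)) x + monomial (-(1 / 2)) (1 / 2) x := by
  have rpow_neg_half {t : ℝ} (ht : 0 < t) : t ^ (-(1 / 2) : ℝ) = t ^ (1 / 2 : ℝ) / t := by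
    rw [show (-(1 / 2) : ℝ) = 1 / 2 - 1 by norm_num, Real.rpow_sub ht, Real.rpow_one]
  simp only [scalSO4, monomial, Real.mul_rpow hx.1.le hx.2.le, rpow_neg_half hx.1,
    rpow_neg_half hx.2]
  field_simp
  ring

def gradScalSO4 (x : Fin 2 → ℝ) : (Fin 2 → ℝ) →L[ℝ] ℝ :=
  gradMonomial (1 / 2) (-(1 / 2)) x + gradMonomial (-(1 / 2)) (1 / 2) x

theorem scalSO4_eventuallyEq (hx : x ∈ positiveQuadrant) :
    scalSO4 =ᶠ[𝓝 x] fun y => monomial (1 / 2) (-(1 / 2)) y + monomial (-(1 / 2)) (1 / 2) y := by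
  filter_upwards [isOpen_positiveQuadrant.mem_nhds hx] with y hy using scalSO4_eq hy

theorem hasFDerivAt_scalSO4 (hx : x ∈ positiveQuadrant) :
    HasFDerivAt scalSO4 (gradScalSO4 x) x :=
  ((hasFDerivAt_monomial _ _ hx.1.ne' hx.2.ne').add
    (hasFDerivAt_monomial _ _ hx.1.ne' hx.2.ne')).congr_of_eventuallyEq (scalSO4_eventuallyEq hx)

theorem contDiffAt_scalSO4 {n : WithTop ℕ∞} (hx : x ∈ positiveQuadrant) :
    ContDiffAt ℝ n scalSO4 x :=
  ((contDiffAt_monomial _ _ hx.1.ne' hx.2.ne').add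
    (contDiffAt_monomial _ _ hx.1.ne' hx.2.ne')).congr_of_eventuallyEq (scalSO4_eventuallyEq hx)

theorem gradScalSO4_one_one : gradScalSO4 ![1, 1] = 0 := by
  ext w
  simp only [gradScalSO4, gradMonomial, monomial_one_one, mul_one, add_apply, smul_apply,
    proj_apply, smul_eq_mul, zero_apply]
  ring

theorem hessSO4_one_one (v w : Fin 2 → ℝ) :
    hessSO4 ![1, 1] v w = 1 / 2 * (v 0 - v 1) * (w 0 - w 1) := by
  have hgrad : ∀ᶠ y in 𝓝 ![1, 1], HasFDerivAt scalSO4 (gradScalSO4 y) y :=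
    eventually_of_mem (isOpen_positiveQuadrant.mem_nhds one_one_mem_positiveQuadrant)
      fun _ hy => hasFDerivAt_scalSO4 hy
  have hhess := (hasFDerivAt_gradMonomial (1 / 2) (-(1 / 2)) one_ne_zero one_ne_zero).add
    (hasFDerivAt_gradMonomial (-(1 / 2)) (1 / 2) (x := ![1, 1]) one_ne_zero one_ne_zero)
  rw [hessSO4, iteratedFDeriv_two_apply_of_hasFDerivAt hgrad hhess]
  simp only [hessMonomial, gradMonomial, monomial_one_one, mul_one, add_apply, smul_apply,
    smulRight_apply, proj_apply, smul_eq_mul]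
  ring

theorem exists_eq_smul_one_one_iff (v : Fin 2 → ℝ) : (∃ t : ℝ, v = t • ![1, 1]) ↔ v 0 = v 1 := by
  constructor
  · rintro ⟨t, rfl⟩
    simp
  · intro h
    exact ⟨v 1, by ext i; fin_cases i <;> simp [h]⟩

end SO4

open SO4

/-- the normal Einstein metric `p = (1,1)` on `SO(4)/T²` is a critical point
of the normalized scalar curvature `f`, and the second derivative of `f` at `p` is positive
semidefinite with kernel exactly the line `ℝ·(1,1)`; i.e. it has exactly one positive and
one zero eigenvalue. In particular the normal Einstein metric has coindex `1`. -/
theorem normal_SO4_coindex_one :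
    ∀ p : Fin 2 → ℝ, p = ![1, 1] →
    HasFDerivAt scalSO4 (0 : (Fin 2 → ℝ) →L[ℝ] ℝ) p ∧
    ContDiffAt ℝ 2 scalSO4 p ∧
    (∀ v : Fin 2 → ℝ, 0 ≤ hessSO4 p v v) ∧
    (∀ v : Fin 2 → ℝ, (∀ w : Fin 2 → ℝ, hessSO4 p v w = 0) ↔ ∃ t : ℝ, v = t • p) ∧
    (∃ v : Fin 2 → ℝ, 0 < hessSO4 p v v) := by
  rintro p rfl
  refine ⟨gradScalSO4_one_one ▸ hasFDerivAt_scalSO4 one_one_mem_positiveQuadrant,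
    contDiffAt_scalSO4 one_one_mem_positiveQuadrant, fun v => ?_, fun v => ?_, ⟨![1, 0], ?_⟩⟩
  · rw [hessSO4_one_one]
    nlinarith [sq_nonneg (v 0 - v 1)]
  · simp_rw [hessSO4_one_one, exists_eq_smul_one_one_iff]
    refine ⟨fun h => ?_, fun h w => by simp [h]⟩
    simpa [sub_eq_zero] using h ![1, 0]
  · rw [hessSO4_one_one]
    norm_num
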